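/- arXiv:0911.3696 — 2 statements merged into one kernel-verified Lean document; each statement's English description precedes it below -/
import Mathlib

section
/- For every m ≥ 2, the image of φ_m is contained in the intersection ∩_{i=0}^{m−2} A ⊗ V^{⊗i} ⊗ R ⊗ V^{⊗(m−i−2)} ⊗ A inside A^{⊗(m+2)}, where R ⊂ V ⊗ V is the k-subspace spanned by the elements x_i ⊗ x_j − q_{i,j} x_j ⊗ x_i (1 ≤ i,j ≤ N), and V is regarded as a subspace of A via x_i ↦ x_i. -/
set_option synthInstance.maxHeartbeats 1000000
set_option maxHeartbeats 1000000

noncomputable section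

open scoped TensorProduct

section QSA
variable (k : Type) [Field k] (N : ℕ) (q : Fin N → Fin N → k)

/-- The commutation relations of the quantum symmetric algebra. -/
inductive QRel : FreeAlgebra k (Fin N) → FreeAlgebra k (Fin N) → Prop
  | rel (i j : Fin N) : QRel (FreeAlgebra.ι k i * FreeAlgebra.ι k j)
      (q i j • (FreeAlgebra.ι k j * FreeAlgebra.ι k i))

/-- The quantum symmetric algebra `A = S_q(V)`. -/
abbrev QSA := RingQuot (QRel k N q)

/-- The generator `x_i` of `S_q(V)`. -/
def X (i : Fin N) : QSA k N q := RingQuot.mkAlgHom k (QRel k N q) (FreeAlgebra.ι k i)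

/-- The product `x_{j_1} x_{j_2} ⋯ x_{j_m}` associated to a tuple `j : Fin m → Fin N`. -/
def xprod (m : ℕ) (j : Fin m → Fin N) : QSA k N q := (List.ofFn fun t => X k N q (j t)).prod

/-- The enveloping algebra `A^e = A ⊗_k A^{op}`. -/
abbrev QSAe := QSA k N q ⊗[k] (QSA k N q)ᵐᵒᵖ

/-- The tower of tensor powers: `TP n` is `A^{⊗(n+1)}`, as a `k`-module. -/
def TP : ℕ → ModuleCat k
  | 0 => ModuleCat.of k (QSA k N q)
  | n + 1 => ModuleCat.of k (QSA k N q ⊗[k] TP n)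

/-- An elementary tensor `v 0 ⊗ v 1 ⊗ ⋯ ⊗ v n` in `A^{⊗(n+1)}`. -/
def tp : (n : ℕ) → (Fin (n + 1) → QSA k N q) → TP k N q n
  | 0, v => v 0
  | n + 1, v => show QSA k N q ⊗[k] TP k N q n from (v 0) ⊗ₜ[k] tp n (fun t => v t.succ)

/-- Left multiplication by an element of `A` on the first tensor factor of `A^{⊗(n+1)}`. -/
def lAct : (n : ℕ) → QSA k N q →ₗ[k] (TP k N q n →ₗ[k] TP k N q n)
  | 0 => LinearMap.mul k (QSA k N q)
  | n + 1 => (LinearMap.rTensorHom (TP k N q n)).comp (LinearMap.mul k (QSA k N q))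

/-- Right multiplication by an element of `A` on the last tensor factor of `A^{⊗(n+1)}`. -/
def rAct : (n : ℕ) → QSA k N q →ₗ[k] (TP k N q n →ₗ[k] TP k N q n)
  | 0 => (LinearMap.mul k (QSA k N q)).flip
  | n + 1 =>
    show QSA k N q →ₗ[k]
        (QSA k N q ⊗[k] TP k N q n →ₗ[k] QSA k N q ⊗[k] TP k N q n) from
      (LinearMap.lTensorHom (QSA k N q)).comp (rAct n)

/-- The outer `A^e = A ⊗ A^{op}`-action on `A^{⊗(n+1)}`: `a ⊗ b^{op}` acts by multiplying
by `a` on the left in the first factor and by `b` on the right in the last factor. -/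
def outerAct (n : ℕ) : QSAe k N q →ₗ[k] (TP k N q n →ₗ[k] TP k N q n) :=
  TensorProduct.lift
    (LinearMap.mk₂ k
      (fun a b => (lAct k N q n a).comp (rAct k N q n (MulOpposite.unop b)))
      (fun a a' b => by simp [map_add, LinearMap.add_comp])
      (fun c a b => by simp [map_smul, LinearMap.smul_comp])
      (fun a b b' => by simp [map_add, LinearMap.comp_add])
      (fun c a b => by simp [map_smul, LinearMap.comp_smul]))

end QSA

section Bar
variable (k : Type) [Field k] (N : ℕ) (q : Fin N → Fin N → k)

/-- Multiplication of the first two tensor factors: `A^{⊗(n+2)} → A^{⊗(n+1)}`. -/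
def barMul₀ : (n : ℕ) → (TP k N q (n + 1) →ₗ[k] TP k N q n)
  | 0 => LinearMap.mul' k (QSA k N q)
  | n + 1 =>
    show QSA k N q ⊗[k] (QSA k N q ⊗[k] TP k N q n) →ₗ[k] QSA k N q ⊗[k] TP k N q n from
      (LinearMap.rTensor (TP k N q n) (LinearMap.mul' k (QSA k N q))).comp
        (TensorProduct.assoc k (QSA k N q) (QSA k N q) (TP k N q n)).symm.toLinearMap

/-- Multiplication of the tensor factors in positions `i, i+1` of `A^{⊗(n+2)}`
(0-indexed; for `i > n` we set the map to be zero, which does not occur below). -/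
def barFace : (n : ℕ) → (i : ℕ) → (TP k N q (n + 1) →ₗ[k] TP k N q n)
  | n, 0 => barMul₀ k N q n
  | 0, _ + 1 => 0
  | n + 1, i + 1 =>
    show QSA k N q ⊗[k] TP k N q (n + 1) →ₗ[k] QSA k N q ⊗[k] TP k N q n from
      LinearMap.lTensor (QSA k N q) (barFace n i)

/-- The bar differential `δ_n : A^{⊗(n+2)} → A^{⊗(n+1)}`,
`δ_n(a_0 ⊗ ⋯ ⊗ a_{n+1}) = Σ_{i=0}^{n} (-1)^i a_0 ⊗ ⋯ ⊗ a_i a_{i+1} ⊗ ⋯ ⊗ a_{n+1}`. -/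
def barD (n : ℕ) : TP k N q (n + 1) →ₗ[k] TP k N q n :=
  ∑ i ∈ Finset.range (n + 1), ((-1 : ℤ) ^ i) • barFace k N q n i

end Bar

section Phi
variable (k : Type) [Field k] (N : ℕ) (q : Fin N → Fin N → k)

/-- `A` is a left `A^e`-module via left and right multiplication. -/
instance : Module (QSAe k N q) (QSA k N q) := TensorProduct.Algebra.module

/-- The `m`-th term `A^e ⊗ ∧^m(V)` of the Koszul complex, realised as the free
`A^e`-module on the set of `m`-element subsets of `{1,…,N}` (corresponding to the basis
`x_{j_1} ∧ ⋯ ∧ x_{j_m}`, `j_1 < ⋯ < j_m`, of `∧^m(V)`). -/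
abbrev KM (m : ℕ) := {S : Finset (Fin N) // S.card = m} →₀ QSAe k N q

/-- The increasing enumeration `j_1 < j_2 < ⋯ < j_m` of an `m`-element subset of `{1,…,N}`. -/
def jfun (m : ℕ) (S : {S : Finset (Fin N) // S.card = m}) : Fin m → Fin N :=
  fun t => S.1.orderIsoOfFin S.2 t

/-- The element `Σ_{π ∈ S_m} sgn(π) q_π^{j_1,…,j_m} ⊗ x_{j_{π(1)}} ⊗ ⋯ ⊗ x_{j_{π(m)}} ⊗ 1`
of `A^{⊗(m+2)}`, where `Qs` encodes the scalars `q_π^{j_1,…,j_m}`. -/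
def phiElt (Qs : (m : ℕ) → (Fin m → Fin N) → Equiv.Perm (Fin m) → k) (m : ℕ)
    (S : {S : Finset (Fin N) // S.card = m}) : TP k N q (m + 1) :=
  ∑ π : Equiv.Perm (Fin m),
    ((Equiv.Perm.sign π : ℤ) • Qs m (jfun N m S) π) •
      tp k N q (m + 1)
        (Fin.cons 1 (Fin.snoc (fun t : Fin m => X k N q (jfun N m S (π t))) 1))

/-- The chain map `φ_m : A^e ⊗ ∧^m(V) → A^{⊗(m+2)}` of the paper, determined by
`φ_m(1 ⊗ 1 ⊗ x_{j_1} ∧ ⋯ ∧ x_{j_m}) =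
  Σ_{π ∈ S_m} sgn(π) q_π^{j_1,…,j_m} ⊗ x_{j_{π(1)}} ⊗ ⋯ ⊗ x_{j_{π(m)}} ⊗ 1`
together with `A^e`-linearity (the outer two tensor factors carry the `A^e`-action). -/
def phi (Qs : (m : ℕ) → (Fin m → Fin N) → Equiv.Perm (Fin m) → k) (m : ℕ) :
    KM k N q m →ₗ[k] TP k N q (m + 1) :=
  Finsupp.lsum k fun S => (outerAct k N q (m + 1)).flip (phiElt k N q Qs m S)

/-- The Koszul differential `d_{m+1}`, as an `A^e`-linear map. -/
def kd (m : ℕ) : KM k N q (m + 1) →ₗ[QSAe k N q] KM k N q m :=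
  Finsupp.linearCombination (QSAe k N q)
    (fun S : {S : Finset (Fin N) // S.card = m + 1} =>
      ∑ i ∈ S.1.attach,
        ((-1 : k) ^ (S.1.filter (fun s => s < i.1)).card) •
          Finsupp.single
            (⟨S.1.erase i.1, by rw [Finset.card_erase_of_mem i.2, S.2]; rfl⟩ :
              {S : Finset (Fin N) // S.card = m})
            ((∏ s ∈ S.1.filter (fun s => s ≤ i.1), q s i.1) •
                (X k N q i.1 ⊗ₜ[k] (1 : (QSA k N q)ᵐᵒᵖ))
              - (∏ s ∈ S.1.filter (fun s => i.1 ≤ s), q i.1 s) •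
                ((1 : QSA k N q) ⊗ₜ[k] MulOpposite.op (X k N q i.1))))

/-- The Koszul differential, as a `k`-linear map. -/
def kdk (m : ℕ) : KM k N q (m + 1) →ₗ[k] KM k N q m :=
  LinearMap.restrictScalars k (kd k N q m)

end Phi

section Subspaces
variable (k : Type) [Field k] (N : ℕ) (q : Fin N → Fin N → k)

/-- The tensor product of two subspaces, as a subspace of the tensor product. -/
def tensorSub {M₁ M₂ : Type} [AddCommGroup M₁] [AddCommGroup M₂] [Module k M₁] [Module k M₂]
    (p : Submodule k M₁) (s : Submodule k M₂) : Submodule k (M₁ ⊗[k] M₂) :=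
  LinearMap.range (TensorProduct.map p.subtype s.subtype)

/-- `V`, regarded as the subspace of `A = S_q(V)` spanned by `x_1, …, x_N`. -/
def Vsub : Submodule k (QSA k N q) := Submodule.span k (Set.range (X k N q))

/-- `R ⊆ V ⊗ V ⊆ A ⊗ A`, the span of the elements `x_i ⊗ x_j - q_{i,j} x_j ⊗ x_i`. -/
def Rsub : Submodule k (QSA k N q ⊗[k] QSA k N q) :=
  Submodule.span k {z | ∃ i j : Fin N,
    z = X k N q i ⊗ₜ[k] X k N q j - q i j • (X k N q j ⊗ₜ[k] X k N q i)}

/-- The subspace `V^{⊗n} ⊗ A` of `A^{⊗(n+1)}`. -/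
def VAsub : (n : ℕ) → Submodule k (TP k N q n)
  | 0 => ⊤
  | n + 1 =>
    show Submodule k (QSA k N q ⊗[k] TP k N q n) from
      tensorSub k (Vsub k N q) (VAsub n)

/-- The subspace `R ⊗ V^{⊗(n-2)} ⊗ A` of `A^{⊗(n+1)}` (defined to be `⊥` for `n ≤ 1`). -/
def RVAsub : (n : ℕ) → Submodule k (TP k N q n)
  | 0 => ⊥
  | 1 => ⊥
  | n + 2 =>
    show Submodule k (QSA k N q ⊗[k] (QSA k N q ⊗[k] TP k N q n)) from
      Submodule.map (TensorProduct.assoc k (QSA k N q) (QSA k N q) (TP k N q n)).toLinearMap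
        (tensorSub k (M₁ := QSA k N q ⊗[k] QSA k N q) (Rsub k N q) (VAsub k N q n))

/-- The subspace `V^{⊗i} ⊗ R ⊗ V^{⊗(n-i-2)} ⊗ A` of `A^{⊗(n+1)}`. -/
def Wsub : (n : ℕ) → (i : ℕ) → Submodule k (TP k N q n)
  | n, 0 => RVAsub k N q n
  | 0, _ + 1 => ⊥
  | n + 1, i + 1 =>
    show Submodule k (QSA k N q ⊗[k] TP k N q n) from
      tensorSub k (Vsub k N q) (Wsub n i)

/-- The subspace `A ⊗ V^{⊗i} ⊗ R ⊗ V^{⊗(m-i-2)} ⊗ A` of `A^{⊗(m+2)}`. -/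
def AWsub (m i : ℕ) : Submodule k (TP k N q (m + 1)) :=
  show Submodule k (QSA k N q ⊗[k] TP k N q m) from
    tensorSub k (⊤ : Submodule k (QSA k N q)) (Wsub k N q m i)

end Subspaces

/-!
Fix `i ≤ m - 2` and pair each permutation `π` with `π * (i i+1)`. The relation
`x_a x_b = q_{a,b} x_b x_a` gives `q_{π (i i+1)} = q_π q_{a,b}` for `a = j_{π(i)}` and
`b = j_{π(i+1)}`, because monomials of `S_q(V)` are nonzero (they act by nonzero weighted shifts
on the monomials of `k[y_1, …, y_N]`). As the signs are opposite, the two terms add up to a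
multiple of `1 ⊗ ⋯ ⊗ (x_a ⊗ x_b - q_{a,b} x_b ⊗ x_a) ⊗ ⋯ ⊗ 1`, which lies in the `i`-th subspace.
Summing over all `π` counts each pair twice, and `2` is invertible. Finally, the outer
`A^e`-action only touches the two outer tensor factors, so it preserves these subspaces.
-/

lemma Submodule.sum_mem_of_forall_add_comp_mem {K M ι : Type*} [DivisionRing K] [CharZero K]
    [AddCommGroup M] [Module K M] [Fintype ι] (W : Submodule K M) (e : ι ≃ ι) (F : ι → M)
    (h : ∀ x, F x + F (e x) ∈ W) : ∑ x, F x ∈ W := by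
  have hsum : ∑ x, F x = (2 : K)⁻¹ • ∑ x, (F x + F (e x)) := by
    rw [Finset.sum_add_distrib, e.sum_comp, ← two_smul K, smul_smul,
      inv_mul_cancel₀ two_ne_zero, one_smul]
  rw [hsum]
  exact W.smul_mem _ (W.sum_mem fun x _ => h x)

lemma Fin.snoc_comp_swap_castSucc {α : Type*} {n : ℕ} (f : Fin n → α) (a : α) (x y : Fin n) :
    Fin.snoc f a ∘ Equiv.swap x.castSucc y.castSucc = Fin.snoc (f ∘ Equiv.swap x y) a := by
  funext t
  cases t using Fin.lastCases with
  | last =>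
    simp [Equiv.swap_apply_of_ne_of_ne (Fin.castSucc_ne_last x).symm
      (Fin.castSucc_ne_last y).symm]
  | cast t => simp [(Fin.castSucc_injective n).swap_apply]

section Monomials
variable {k : Type} [Field k] {N : ℕ} {q : Fin N → Fin N → k}

lemma X_mul_X (i j : Fin N) : X k N q i * X k N q j = q i j • (X k N q j * X k N q i) := by
  simpa [X, map_mul, map_smul] using RingQuot.mkAlgHom_rel k (QRel.rel (q := q) i j)

lemma xprod_succ {m : ℕ} (u : Fin (m + 1) → Fin N) :
    xprod k N q (m + 1) u = X k N q (u 0) * xprod k N q m (Fin.tail u) := by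
  simp [xprod, List.ofFn_succ, Fin.tail]

lemma xprod_eq_smul_xprod_comp_swap {m p : ℕ} (hp : p + 1 < m) (u : Fin m → Fin N) :
    xprod k N q m u = q (u ⟨p, by omega⟩) (u ⟨p + 1, hp⟩) •
      xprod k N q m (u ∘ Equiv.swap ⟨p, by omega⟩ ⟨p + 1, hp⟩) := by
  induction p generalizing m with
  | zero =>
    obtain ⟨m, rfl⟩ : ∃ m', m = m' + 2 := ⟨m - 2, by omega⟩
    have htail : Fin.tail (Fin.tail (u ∘ Equiv.swap 0 1)) = Fin.tail (Fin.tail u) := by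
      ext t
      simp [Fin.tail, Equiv.swap_apply_of_ne_of_ne, Fin.ext_iff]
    change _ = q (u 0) (u 1) • xprod k N q (m + 2) (u ∘ Equiv.swap 0 1)
    rw [xprod_succ, xprod_succ, xprod_succ (u ∘ _), xprod_succ, htail, ← mul_assoc,
      ← mul_assoc, X_mul_X, smul_mul_assoc]
    simp [Fin.tail]
  | succ p ih =>
    obtain ⟨m, rfl⟩ : ∃ m', m = m' + 1 := ⟨m - 1, by omega⟩
    have htail : Fin.tail (u ∘ Equiv.swap ⟨p + 1, by omega⟩ ⟨p + 2, hp⟩)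
        = Fin.tail u ∘ Equiv.swap ⟨p, by omega⟩ ⟨p + 1, by omega⟩ := by
      ext t
      exact congrArg (fun t => (u t : ℕ))
        ((Fin.succ_injective _).swap_apply ⟨p, by omega⟩ ⟨p + 1, by omega⟩ t)
    rw [xprod_succ, xprod_succ, htail, ih (by omega), mul_smul_comm]
    rfl

end Monomials

section PolynomialRepresentation
variable {k : Type} [Field k] {N : ℕ} (q : Fin N → Fin N → k)

def twistCoeff (i : Fin N) (f : Fin N →₀ ℕ) : k :=
  ∏ t with t < i, q i t ^ f t

def twistShift (i : Fin N) : ((Fin N →₀ ℕ) →₀ k) →ₗ[k] ((Fin N →₀ ℕ) →₀ k) :=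
  Finsupp.lsum k fun f => twistCoeff q i f • Finsupp.lsingle (f + Finsupp.single i 1)

variable {q}

lemma twistCoeff_ne_zero (hq0 : ∀ i j, q i j ≠ 0) (i : Fin N) (f : Fin N →₀ ℕ) :
    twistCoeff q i f ≠ 0 :=
  Finset.prod_ne_zero_iff.2 fun t _ => pow_ne_zero _ (hq0 i t)

lemma twistCoeff_add_single (i j : Fin N) (f : Fin N →₀ ℕ) :
    twistCoeff q i (f + Finsupp.single j 1) = twistCoeff q i f * if j < i then q i j else 1 := by
  have hfactor : ∀ t, q i t ^ (f + Finsupp.single j 1 : Fin N →₀ ℕ) t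
      = q i t ^ f t * if j = t then q i t else 1 := fun t => by
    rw [Finsupp.add_apply, pow_add, Finsupp.single_apply]
    split_ifs <;> simp
  simp only [twistCoeff, hfactor, Finset.prod_mul_distrib, Finset.prod_ite_eq,
    Finset.mem_filter_univ]

lemma twistShift_single (i : Fin N) (f : Fin N →₀ ℕ) (s : k) :
    twistShift q i (Finsupp.single f s)
      = Finsupp.single (f + Finsupp.single i 1) (twistCoeff q i f * s) := by
  simp [twistShift, Finsupp.smul_single]

lemma twistShift_comm (hq0 : ∀ i j, q i j ≠ 0) (hq1 : ∀ i, q i i = 1)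
    (hqinv : ∀ i j, q j i = (q i j)⁻¹) (i j : Fin N) :
    twistShift q i ∘ₗ twistShift q j = q i j • (twistShift q j ∘ₗ twistShift q i) := by
  refine Finsupp.lhom_ext fun f s => ?_
  simp only [LinearMap.comp_apply, LinearMap.smul_apply, twistShift_single,
    Finsupp.smul_single, add_right_comm f, twistCoeff_add_single, smul_eq_mul]
  congr 1
  rcases lt_trichotomy i j with h | rfl | h
  · simp only [if_pos h, if_neg h.not_gt, hqinv i j]
    field_simp [hq0 i j]
  · simp [hq1]
  · simp only [if_pos h, if_neg h.not_gt]
    ring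

def polyRep (hq0 : ∀ i j, q i j ≠ 0) (hq1 : ∀ i, q i i = 1)
    (hqinv : ∀ i j, q j i = (q i j)⁻¹) :
    QSA k N q →ₐ[k] Module.End k ((Fin N →₀ ℕ) →₀ k) :=
  RingQuot.liftAlgHom k ⟨FreeAlgebra.lift k (twistShift q), by
    rintro _ _ ⟨i, j⟩
    simp only [map_mul, map_smul, FreeAlgebra.lift_ι_apply]
    exact twistShift_comm hq0 hq1 hqinv i j⟩

lemma polyRep_X (hq0 : ∀ i j, q i j ≠ 0) (hq1 : ∀ i, q i i = 1)
    (hqinv : ∀ i j, q j i = (q i j)⁻¹) (i : Fin N) :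
    polyRep hq0 hq1 hqinv (X k N q i) = twistShift q i := by
  rw [X, polyRep, RingQuot.liftAlgHom_mkAlgHom_apply, FreeAlgebra.lift_ι_apply]

lemma polyRep_xprod_single (hq0 : ∀ i j, q i j ≠ 0) (hq1 : ∀ i, q i i = 1)
    (hqinv : ∀ i j, q j i = (q i j)⁻¹) {m : ℕ} (u : Fin m → Fin N) (f : Fin N →₀ ℕ) :
    ∃ (g : Fin N →₀ ℕ) (c : k), c ≠ 0 ∧
      polyRep hq0 hq1 hqinv (xprod k N q m u) (Finsupp.single f 1) = Finsupp.single g c := by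
  induction m with
  | zero => exact ⟨f, 1, one_ne_zero, by simp [xprod]⟩
  | succ m ih =>
    obtain ⟨g, c, hc, he⟩ := ih (Fin.tail u)
    refine ⟨g + Finsupp.single (u 0) 1, twistCoeff q (u 0) g * c,
      mul_ne_zero (twistCoeff_ne_zero hq0 _ _) hc, ?_⟩
    rw [xprod_succ, map_mul, Module.End.mul_apply, he, polyRep_X, twistShift_single]

lemma xprod_ne_zero (hq0 : ∀ i j, q i j ≠ 0) (hq1 : ∀ i, q i i = 1)
    (hqinv : ∀ i j, q j i = (q i j)⁻¹) {m : ℕ} (u : Fin m → Fin N) :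
    xprod k N q m u ≠ 0 := by
  intro h
  obtain ⟨g, c, hc, he⟩ := polyRep_xprod_single hq0 hq1 hqinv u 0
  rw [h, map_zero, LinearMap.zero_apply, eq_comm, Finsupp.single_eq_zero] at he
  exact hc he

end PolynomialRepresentation

lemma coeff_mul_swap {k : Type} [Field k] {N : ℕ} {q : Fin N → Fin N → k}
    (hq0 : ∀ i j, q i j ≠ 0) (hq1 : ∀ i, q i i = 1) (hqinv : ∀ i j, q j i = (q i j)⁻¹)
    {m p : ℕ} (hp : p + 1 < m) {j : Fin m → Fin N} {c : Equiv.Perm (Fin m) → k}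
    (hc : ∀ π, c π • xprod k N q m (fun t => j (π t)) = xprod k N q m j)
    (π : Equiv.Perm (Fin m)) :
    c (π * Equiv.swap ⟨p, by omega⟩ ⟨p + 1, hp⟩)
      = c π * q (j (π ⟨p, by omega⟩)) (j (π ⟨p + 1, hp⟩)) := by
  have hcomp : (fun t => j ((π * Equiv.swap (⟨p, by omega⟩ : Fin m) ⟨p + 1, hp⟩) t))
      = (fun t => j (π t)) ∘ Equiv.swap ⟨p, by omega⟩ ⟨p + 1, hp⟩ := rfl
  refine smul_left_injective k (xprod_ne_zero hq0 hq1 hqinv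
    (fun t => j ((π * Equiv.swap (⟨p, by omega⟩ : Fin m) ⟨p + 1, hp⟩) t))) ?_
  dsimp only
  rw [hc, mul_smul, hcomp, ← xprod_eq_smul_xprod_comp_swap hp (fun t => j (π t)), hc]

section TensorSubspaces
variable {k : Type} [Field k] {M₁ M₂ : Type} [AddCommGroup M₁] [AddCommGroup M₂] [Module k M₁]
  [Module k M₂] {p : Submodule k M₁} {s : Submodule k M₂}

lemma tmul_mem_tensorSub {x : M₁} {y : M₂} (hx : x ∈ p) (hy : y ∈ s) :
    x ⊗ₜ[k] y ∈ tensorSub k p s :=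
  ⟨(⟨x, hx⟩ : p) ⊗ₜ[k] (⟨y, hy⟩ : s), rfl⟩

lemma map_mem_tensorSub {f : M₁ →ₗ[k] M₁} {g : M₂ →ₗ[k] M₂} (hf : ∀ x ∈ p, f x ∈ p)
    (hg : ∀ y ∈ s, g y ∈ s) {z : M₁ ⊗[k] M₂} (hz : z ∈ tensorSub k p s) :
    TensorProduct.map f g z ∈ tensorSub k p s := by
  obtain ⟨z, rfl⟩ := hz
  refine ⟨TensorProduct.map (f.restrict hf) (g.restrict hg) z, ?_⟩
  rw [← LinearMap.comp_apply, ← LinearMap.comp_apply, ← TensorProduct.map_comp,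
    ← TensorProduct.map_comp]
  rfl

end TensorSubspaces

section OuterAction
variable {k : Type} [Field k] {N : ℕ} {q : Fin N → Fin N → k}

lemma rAct_mem_VAsub {n : ℕ} (b : QSA k N q) {z : TP k N q n} (hz : z ∈ VAsub k N q n) :
    rAct k N q n b z ∈ VAsub k N q n := by
  induction n with
  | zero => exact Submodule.mem_top
  | succ n ih => exact map_mem_tensorSub (fun x hx => hx) (fun y hy => ih hy) hz

lemma rAct_mem_RVAsub {n : ℕ} (b : QSA k N q) {z : TP k N q n} (hz : z ∈ RVAsub k N q n) :
    rAct k N q n b z ∈ RVAsub k N q n := by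
  match n, z, hz with
  | 0, _, hz | 1, _, hz => simp_all [RVAsub]
  | n + 2, _, ⟨w, hw, rfl⟩ =>
    refine ⟨_, map_mem_tensorSub (f := LinearMap.id) (fun x hx => hx)
      (fun y hy => rAct_mem_VAsub b hy) hw, ?_⟩
    change TensorProduct.assoc _ _ _ _ (LinearMap.lTensor _ (rAct k N q n b) w) = _
    rw [LinearMap.lTensor_tensor]
    simp only [LinearMap.comp_apply, LinearEquiv.coe_coe, LinearEquiv.apply_symm_apply]
    rfl

lemma Wsub_zero (n : ℕ) : Wsub k N q n 0 = RVAsub k N q n := by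
  cases n <;> rfl

lemma rAct_mem_Wsub {n i : ℕ} (b : QSA k N q) {z : TP k N q n} (hz : z ∈ Wsub k N q n i) :
    rAct k N q n b z ∈ Wsub k N q n i := by
  induction i generalizing n with
  | zero =>
    rw [Wsub_zero] at hz ⊢
    exact rAct_mem_RVAsub b hz
  | succ i ih =>
    cases n with
    | zero => simp_all [Wsub]
    | succ n =>
      exact map_mem_tensorSub (f := LinearMap.id) (fun x hx => hx) (fun y hy => ih hy) hz

lemma outerAct_mem_AWsub {m i : ℕ} (z : QSAe k N q) {w : TP k N q (m + 1)}
    (hw : w ∈ AWsub k N q m i) : outerAct k N q (m + 1) z w ∈ AWsub k N q m i := by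
  induction z using TensorProduct.induction_on with
  | zero => exact Submodule.zero_mem _
  | add x y hx hy =>
    rw [map_add, LinearMap.add_apply]
    exact Submodule.add_mem _ hx hy
  | tmul a b =>
    have hr : rAct k N q (m + 1) b.unop w ∈ AWsub k N q m i :=
      map_mem_tensorSub (f := LinearMap.id) (fun x hx => hx) (fun y hy => rAct_mem_Wsub _ hy) hw
    exact map_mem_tensorSub (g := LinearMap.id) (fun _ _ => Submodule.mem_top) (fun y hy => hy) hr

end OuterAction

section ElementaryTensors
variable {k : Type} [Field k] {N : ℕ} {q : Fin N → Fin N → k}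

lemma tp_succ {n : ℕ} (v : Fin (n + 2) → QSA k N q) :
    tp k N q (n + 1) v = v 0 ⊗ₜ[k] tp k N q n (Fin.tail v) := rfl

lemma X_mem_Vsub (i : Fin N) : X k N q i ∈ Vsub k N q :=
  Submodule.subset_span ⟨i, rfl⟩

lemma tp_mem_VAsub {n : ℕ} (v : Fin (n + 1) → QSA k N q)
    (hv : ∀ t : Fin n, v t.castSucc ∈ Vsub k N q) : tp k N q n v ∈ VAsub k N q n := by
  induction n with
  | zero => exact Submodule.mem_top
  | succ n ih =>
    exact tmul_mem_tensorSub (hv 0) (ih _ fun t => Fin.succ_castSucc t ▸ hv t.succ)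

lemma tp_sub_smul_tp_comp_swap_mem_Wsub {n i : ℕ} (hi : i + 2 ≤ n)
    (v : Fin (n + 1) → QSA k N q) (hv : ∀ t : Fin n, v t.castSucc ∈ Vsub k N q) (c : k)
    (hR : v ⟨i, by omega⟩ ⊗ₜ[k] v ⟨i + 1, by omega⟩
      - c • (v ⟨i + 1, by omega⟩ ⊗ₜ[k] v ⟨i, by omega⟩) ∈ Rsub k N q) :
    tp k N q n v - c • tp k N q n (v ∘ Equiv.swap ⟨i, by omega⟩ ⟨i + 1, by omega⟩)
      ∈ Wsub k N q n i := by
  induction i generalizing n with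
  | zero =>
    obtain ⟨n, rfl⟩ : ∃ n', n = n' + 2 := ⟨n - 2, by omega⟩
    rw [Wsub_zero]
    refine ⟨_, tmul_mem_tensorSub hR (tp_mem_VAsub (Fin.tail (Fin.tail v))
      fun t => hv t.succ.succ), ?_⟩
    have htail : Fin.tail (Fin.tail (v ∘ Equiv.swap 0 1)) = Fin.tail (Fin.tail v) := by
      funext t
      exact congrArg v (Equiv.swap_apply_of_ne_of_ne (Fin.succ_ne_zero _)
        fun h => Fin.succ_ne_zero t (Fin.succ_injective _ h))
    have hswap0 : (v ∘ Equiv.swap 0 1) 0 = v 1 := by simp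
    have hswap1 : Fin.tail (v ∘ Equiv.swap 0 1) 0 = v 0 := by simp [Fin.tail]
    change _ = tp k N q (n + 2) v - c • tp k N q (n + 2) (v ∘ Equiv.swap 0 1)
    rw [tp_succ, tp_succ, tp_succ (v ∘ _), tp_succ (Fin.tail (v ∘ _)), htail, hswap0, hswap1]
    set Z := tp k N q n (Fin.tail (Fin.tail v))
    have key : TensorProduct.assoc k (QSA k N q) (QSA k N q) (TP k N q n)
        ((v 0 ⊗ₜ[k] v 1 - c • (v 1 ⊗ₜ[k] v 0)) ⊗ₜ[k] Z)
        = v 0 ⊗ₜ[k] (v 1 ⊗ₜ[k] Z) - c • (v 1 ⊗ₜ[k] (v 0 ⊗ₜ[k] Z)) := by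
      -- computed through a linear map out of `A ⊗ A`: instance search does not find the
      -- `AddCommGroup` structure on `(A ⊗ A) ⊗ TP n`, so `sub_tmul` does not apply
      change ((TensorProduct.assoc k _ _ _).toLinearMap ∘ₗ
        (TensorProduct.mk k (QSA k N q ⊗[k] QSA k N q) (TP k N q n)).flip Z)
          (v 0 ⊗ₜ[k] v 1 - c • (v 1 ⊗ₜ[k] v 0)) = _
      rw [map_sub, map_smul]
      rfl
    exact key
  | succ i ih =>
    obtain ⟨n, rfl⟩ : ∃ n', n = n' + 1 := ⟨n - 1, by omega⟩
    have htail : Fin.tail (v ∘ Equiv.swap ⟨i + 1, by omega⟩ ⟨i + 2, by omega⟩)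
        = Fin.tail v ∘ Equiv.swap ⟨i, by omega⟩ ⟨i + 1, by omega⟩ := by
      funext t
      exact congrArg v ((Fin.succ_injective _).swap_apply ⟨i, by omega⟩ ⟨i + 1, by omega⟩ t)
    have hhead : (v ∘ Equiv.swap ⟨i + 1, by omega⟩ ⟨i + 2, by omega⟩) 0 = v 0 :=
      congrArg v (Equiv.swap_apply_of_ne_of_ne (by simp [Fin.ext_iff]) (by simp [Fin.ext_iff]))
    have key := tmul_mem_tensorSub (hv 0)
      (ih (by omega) (Fin.tail v)
        (fun t => (Fin.succ_castSucc t ▸ hv t.succ : v t.castSucc.succ ∈ Vsub k N q)) hR)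
    rw [TensorProduct.tmul_sub, TensorProduct.tmul_smul] at key
    rw [tp_succ (v ∘ _), htail, hhead]
    exact key

end ElementaryTensors

section Phi
variable {k : Type} [Field k] {N : ℕ} {q : Fin N → Fin N → k}

lemma jfun_injective {m : ℕ} (S : {S : Finset (Fin N) // S.card = m}) :
    Function.Injective (jfun N m S) :=
  Subtype.val_injective.comp (S.1.orderIsoOfFin S.2).injective

lemma tp_snoc_sub_smul_tp_snoc_swap_mem_Wsub {m i : ℕ} (hi : i + 2 ≤ m) (u : Fin m → Fin N) :
    tp k N q m (Fin.snoc (fun t => X k N q (u t)) 1)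
      - q (u ⟨i, by omega⟩) (u ⟨i + 1, by omega⟩) •
        tp k N q m
          (Fin.snoc (fun t => X k N q (u (Equiv.swap ⟨i, by omega⟩ ⟨i + 1, by omega⟩ t))) 1)
      ∈ Wsub k N q m i := by
  have hswap : Fin.snoc (fun t => X k N q (u (Equiv.swap ⟨i, by omega⟩ ⟨i + 1, by omega⟩ t))) 1
      = Fin.snoc (fun t => X k N q (u t)) 1 ∘
        Equiv.swap (⟨i, by omega⟩ : Fin (m + 1)) ⟨i + 1, by omega⟩ :=
    (Fin.snoc_comp_swap_castSucc (fun t => X k N q (u t)) 1 ⟨i, by omega⟩ ⟨i + 1, by omega⟩).symm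
  rw [hswap]
  refine tp_sub_smul_tp_comp_swap_mem_Wsub hi _ (fun t => ?_) _ ?_
  · rw [Fin.snoc_castSucc]
    exact X_mem_Vsub _
  · have hi0 : (⟨i, by omega⟩ : Fin (m + 1)) = Fin.castSucc ⟨i, by omega⟩ := rfl
    have hi1 : (⟨i + 1, by omega⟩ : Fin (m + 1)) = Fin.castSucc ⟨i + 1, by omega⟩ := rfl
    rw [hi0, hi1, Fin.snoc_castSucc, Fin.snoc_castSucc]
    exact Submodule.subset_span ⟨_, _, rfl⟩

lemma phiElt_mem_AWsub [CharZero k] (hq0 : ∀ i j, q i j ≠ 0) (hq1 : ∀ i, q i i = 1)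
    (hqinv : ∀ i j, q j i = (q i j)⁻¹) (Qs : (m : ℕ) → (Fin m → Fin N) → Equiv.Perm (Fin m) → k)
    {m i : ℕ} (hi : i + 2 ≤ m) (S : {S : Finset (Fin N) // S.card = m})
    (hQs : ∀ π : Equiv.Perm (Fin m), Qs m (jfun N m S) π •
      xprod k N q m (fun t => jfun N m S (π t)) = xprod k N q m (jfun N m S)) :
    phiElt k N q Qs m S ∈ AWsub k N q m i := by
  set J := jfun N m S
  set τ : Equiv.Perm (Fin m) := Equiv.swap ⟨i, by omega⟩ ⟨i + 1, by omega⟩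
  set c : Equiv.Perm (Fin m) → k := fun π => (Equiv.Perm.sign π : ℤ) • Qs m J π
  set T : Equiv.Perm (Fin m) → TP k N q m :=
    fun π => tp k N q m (Fin.snoc (fun t => X k N q (J (π t))) 1)
  have hc (π : Equiv.Perm (Fin m)) :
      c (π * τ) = -(c π * q (J (π ⟨i, by omega⟩)) (J (π ⟨i + 1, by omega⟩))) := by
    have hsign : Equiv.Perm.sign (π * τ) = -Equiv.Perm.sign π := by
      rw [map_mul, Equiv.Perm.sign_swap (by simp [Fin.ext_iff]), mul_neg, mul_one]
    have hQ : Qs m J (π * τ) = Qs m J π * q (J (π ⟨i, by omega⟩)) (J (π ⟨i + 1, by omega⟩)) :=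
      coeff_mul_swap hq0 hq1 hqinv (show i + 1 < m by omega) hQs π
    simp only [c, hsign, hQ, Units.val_neg, neg_smul, smul_mul_assoc]
  have hpair (π : Equiv.Perm (Fin m)) :
      c π • T π + c (Equiv.mulRight τ π) • T (Equiv.mulRight τ π) ∈ Wsub k N q m i := by
    rw [Equiv.coe_mulRight, hc, neg_smul, mul_smul, ← sub_eq_add_neg, ← smul_sub]
    exact Submodule.smul_mem _ _ (tp_snoc_sub_smul_tp_snoc_swap_mem_Wsub hi (fun t => J (π t)))
  have hmem := tmul_mem_tensorSub (Submodule.mem_top (x := (1 : QSA k N q)))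
    (Submodule.sum_mem_of_forall_add_comp_mem _ _ _ hpair)
  rw [TensorProduct.tmul_sum] at hmem
  simp only [TensorProduct.tmul_smul] at hmem
  exact hmem

end Phi

theorem stmt4_general (k : Type) [Field k] [CharZero k] (N : ℕ)
    (q : Fin N → Fin N → k) (hq0 : ∀ i j, q i j ≠ 0) (hq1 : ∀ i, q i i = 1)
    (hqinv : ∀ i j, q j i = (q i j)⁻¹)
    (Qs : (m : ℕ) → (Fin m → Fin N) → Equiv.Perm (Fin m) → k)
    -- `Qs m j π` is the scalar `q_π^{j_1,…,j_m}`, characterised by the equation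
    -- `q_π^{j_1,…,j_m} • x_{j_{π(1)}} ⋯ x_{j_{π(m)}} = x_{j_1} ⋯ x_{j_m}` in `S_q(V)`:
    (hQs : ∀ (m : ℕ) (j : Fin m → Fin N), Function.Injective j →
      ∀ π : Equiv.Perm (Fin m),
        Qs m j π • xprod k N q m (fun t => j (π t)) = xprod k N q m j)
    (m : ℕ) :
    LinearMap.range (phi k N q Qs m) ≤
      ⨅ i ∈ Finset.range (m - 1), AWsub k N q m i := by
  rintro _ ⟨y, rfl⟩
  simp only [Submodule.mem_iInf, Finset.mem_range]
  intro i hi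
  rw [phi, Finsupp.lsum_apply]
  exact Submodule.sum_mem _ fun S _ => outerAct_mem_AWsub _
    (phiElt_mem_AWsub hq0 hq1 hqinv Qs (by omega) S (hQs m _ (jfun_injective S)))

/-- Remark 2.2 of the paper: for `m ≥ 2` the image of `φ_m` is contained in
`⋂_{i=0}^{m-2} A ⊗ V^{⊗i} ⊗ R ⊗ V^{⊗(m-i-2)} ⊗ A ⊆ A^{⊗(m+2)}`. -/
theorem stmt4 (k : Type) [Field k] [CharZero k] (N : ℕ) (hN : 0 < N)
    (q : Fin N → Fin N → k) (hq0 : ∀ i j, q i j ≠ 0) (hq1 : ∀ i, q i i = 1)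
    (hqinv : ∀ i j, q j i = (q i j)⁻¹)
    (Qs : (m : ℕ) → (Fin m → Fin N) → Equiv.Perm (Fin m) → k)
    -- `Qs m j π` is the scalar `q_π^{j_1,…,j_m}`, characterised by the equation
    -- `q_π^{j_1,…,j_m} • x_{j_{π(1)}} ⋯ x_{j_{π(m)}} = x_{j_1} ⋯ x_{j_m}` in `S_q(V)`:
    (hQs : ∀ (m : ℕ) (j : Fin m → Fin N), Function.Injective j →
      ∀ π : Equiv.Perm (Fin m),
        Qs m j π • xprod k N q m (fun t => j (π t)) = xprod k N q m j)
    (m : ℕ) (hm : 2 ≤ m) :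
    LinearMap.range (phi k N q Qs m) ≤
      ⨅ i ∈ Finset.range (m - 1), AWsub k N q m i :=
  stmt4_general k N q hq0 hq1 hqinv Qs hQs m
end
end

section
/- For every α ∈ ℕ^N and β ∈ {0,1}^N, the following identity holds in k: Σ_{i=1}^N [ Ω_g(α,β,i) · ω_g(α+[i], β+[i], i) + ω_g(α,β,i) · Ω_g(α−[i], β−[i], i) ] = ‖α − β‖_g (the natural number ‖α−β‖_g viewed in k). -/
attribute [local instance] Classical.propDecidable

noncomputable section

section Scalars
variable (k : Type) [Field k] (N : ℕ) (q : Fin N → Fin N → k) (lam : Fin N → k)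

/-- `ε(β,i) = (-1)^{β_1 + ⋯ + β_i}`. -/
def eps (β : Fin N → ℤ) (i : Fin N) : k :=
  (-1 : k) ^ (∑ s ∈ Finset.univ.filter (fun s => s ≤ i), β s)

/-- The scalar `Ω_g(α, β, i)` of the paper: `0` if `∏_{s=1}^N q_{i,s}^{α_s-β_s} = λ_i`,
`0` if `β_i ≠ 0`, and
`ε(β,i) (∏_{s=1}^i q_{i,s}^{α_s-β_s} - λ_i ∏_{s=i}^N q_{s,i}^{α_s-β_s})` otherwise. -/
def Omega (α β : Fin N → ℤ) (i : Fin N) : k :=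
  if (∏ s, q i s ^ (α s - β s)) = lam i then 0
  else if β i ≠ 0 then 0
  else
    eps k N β i *
      ((∏ s ∈ Finset.univ.filter (fun s => s ≤ i), q i s ^ (α s - β s))
        - lam i * (∏ s ∈ Finset.univ.filter (fun s => i ≤ s), q s i ^ (α s - β s)))

/-- The scalar `ω_g(α, β, i)` of the paper: `0` if `∏_{s=1}^N q_{i,s}^{α_s-β_s} = λ_i`,
or `α_i ≤ 0`, or `β_i ≠ 1`; and `Ω_g(α-[i], β-[i], i)⁻¹` otherwise. -/
def omg (α β : Fin N → ℤ) (i : Fin N) : k :=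
  if (∏ s, q i s ^ (α s - β s)) = lam i then 0
  else if α i ≤ 0 then 0
  else if β i ≠ 1 then 0
  else (Omega k N q lam (α - Pi.single i 1) (β - Pi.single i 1) i)⁻¹

/-- `‖γ‖_g`, the number of indices `i` with `∏_{s=1}^N q_{i,s}^{γ_s} ≠ λ_i` and
`γ_i ≠ -1`. -/
def normg (γ : Fin N → ℤ) : ℕ :=
  (Finset.univ.filter (fun i : Fin N => (∏ s, q i s ^ γ s) ≠ lam i ∧ γ i ≠ -1)).card

end Scalars



lemma prod_split (k : Type) [Field k] (N : ℕ) (q : Fin N → Fin N → k)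
    (hq1 : ∀ i, q i i = 1) (γ : Fin N → ℤ) (i : Fin N) :
    (∏ s ∈ Finset.univ.filter (fun s => s ≤ i), q i s ^ γ s) *
      (∏ s ∈ Finset.univ.filter (fun s => i ≤ s), q i s ^ γ s) = ∏ s, q i s ^ γ s := by
  have h := Finset.prod_union_inter (s₁ := Finset.univ.filter (fun s : Fin N => s ≤ i))
    (s₂ := Finset.univ.filter (fun s => i ≤ s)) (f := fun s => q i s ^ γ s)
  have hu : Finset.univ.filter (fun s : Fin N => s ≤ i) ∪ Finset.univ.filter (fun s => i ≤ s)
      = Finset.univ := by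
    ext s; simp [le_total]
  have hi : Finset.univ.filter (fun s : Fin N => s ≤ i) ∩ Finset.univ.filter (fun s => i ≤ s)
      = {i} := by
    ext s; simp [le_antisymm_iff, and_comm]
  rw [hu, hi] at h
  simpa [hq1 i] using h.symm

lemma Omega_ne (k : Type) [Field k] (N : ℕ) (q : Fin N → Fin N → k)
    (hq0 : ∀ i j, q i j ≠ 0) (hq1 : ∀ i, q i i = 1) (hqinv : ∀ i j, q j i = (q i j)⁻¹)
    (lam : Fin N → k) (α β : Fin N → ℤ) (i : Fin N) (hβ : β i = 0)
    (hP : (∏ s, q i s ^ (α s - β s)) ≠ lam i) : Omega k N q lam α β i ≠ 0 := by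
  unfold Omega
  rw [if_neg hP, if_neg (by simp [hβ])]
  apply mul_ne_zero
  · exact zpow_ne_zero _ (by norm_num)
  set C := ∏ s ∈ Finset.univ.filter (fun s => i ≤ s), q i s ^ (α s - β s) with hCdef
  have hC : C ≠ 0 :=
    Finset.prod_ne_zero_iff.mpr fun s _ => zpow_ne_zero _ (hq0 i s)
  have hB : (∏ s ∈ Finset.univ.filter (fun s => i ≤ s), q s i ^ (α s - β s)) = C⁻¹ := by
    rw [hCdef, ← Finset.prod_inv_distrib]
    exact Finset.prod_congr rfl fun s _ => by rw [hqinv i s, inv_zpow]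
  have hAC := prod_split k N q hq1 (fun s => α s - β s) i
  rw [hB]
  intro h
  apply hP
  have hA : (∏ s ∈ Finset.univ.filter (fun s => s ≤ i), q i s ^ (α s - β s)) = lam i * C⁻¹ :=
    sub_eq_zero.mp h
  rw [← hAC, hA, mul_assoc, inv_mul_cancel₀ hC, mul_one]

/-- The scalar identity used in the proof of Lemma 4.5 of the paper: for `α ∈ ℕ^N` and
`β ∈ {0,1}^N`,
`Σ_{i=1}^N [Ω_g(α,β,i) ω_g(α+[i],β+[i],i) + ω_g(α,β,i) Ω_g(α-[i],β-[i],i)] = ‖α-β‖_g`. -/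
theorem stmt12 (k : Type) [Field k] [CharZero k] (N : ℕ) (hN : 0 < N)
    (q : Fin N → Fin N → k) (hq0 : ∀ i j, q i j ≠ 0) (hq1 : ∀ i, q i i = 1)
    (hqinv : ∀ i j, q j i = (q i j)⁻¹)
    (lam : Fin N → k) (hlam : ∀ i, lam i ≠ 0)
    (α : Fin N → ℤ) (hα : ∀ i, 0 ≤ α i)
    (β : Fin N → ℤ) (hβ : ∀ i, β i = 0 ∨ β i = 1) :
    ∑ i : Fin N,
      (Omega k N q lam α β i * omg k N q lam (α + Pi.single i 1) (β + Pi.single i 1) i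
        + omg k N q lam α β i * Omega k N q lam (α - Pi.single i 1) (β - Pi.single i 1) i)
      = (normg k N q lam (α - β) : k) := by

  have key : ∀ i : Fin N,
      Omega k N q lam α β i * omg k N q lam (α + Pi.single i 1) (β + Pi.single i 1) i
        + omg k N q lam α β i * Omega k N q lam (α - Pi.single i 1) (β - Pi.single i 1) i
      = if ((∏ s, q i s ^ (α s - β s)) ≠ lam i ∧ α i - β i ≠ -1) then (1 : k) else 0 := by
    intro i
    have hPadd : (∏ s, q i s ^ (((α + Pi.single i 1 : Fin N → ℤ)) s - ((β + Pi.single i 1 : Fin N → ℤ)) s))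
        = ∏ s, q i s ^ (α s - β s) :=
      Finset.prod_congr rfl fun s _ => by simp only [Pi.add_apply]; congr 1; ring
    have hPsub : (∏ s, q i s ^ (((α - Pi.single i 1 : Fin N → ℤ)) s - ((β - Pi.single i 1 : Fin N → ℤ)) s))
        = ∏ s, q i s ^ (α s - β s) :=
      Finset.prod_congr rfl fun s _ => by simp only [Pi.sub_apply]; congr 1; ring
    by_cases hP : (∏ s, q i s ^ (α s - β s)) = lam i
    · have h1 : Omega k N q lam α β i = 0 := by unfold Omega; rw [if_pos hP]
      have h2 : omg k N q lam α β i = 0 := by unfold omg; rw [if_pos hP]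
      simp [h1, h2, hP]
    · rcases hβ i with h0 | h1
      · -- β i = 0
        have hΩ : Omega k N q lam α β i ≠ 0 := Omega_ne k N q hq0 hq1 hqinv lam α β i h0 hP
        have hω0 : omg k N q lam α β i = 0 := by
          unfold omg
          rw [if_neg hP]
          split_ifs with h2 h3
          · rfl
          · rfl
          · exfalso; omega
        have hω : omg k N q lam (α + Pi.single i 1) (β + Pi.single i 1) i
            = (Omega k N q lam α β i)⁻¹ := by
          unfold omg
          rw [hPadd, if_neg hP]
          rw [if_neg (by simp only [Pi.add_apply, Pi.single_eq_same]; have := hα i; omega)]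
          rw [if_neg (by simp only [Pi.add_apply, Pi.single_eq_same, ne_eq, not_not]; omega)]
          simp
        rw [hω, hω0, mul_inv_cancel₀ hΩ, zero_mul, add_zero,
          if_pos ⟨hP, by have := hα i; omega⟩]
      · -- β i = 1
        have hΩ0 : Omega k N q lam α β i = 0 := by
          unfold Omega
          rw [if_neg hP, if_pos (by omega)]
        by_cases ha : α i ≤ 0
        · have hai : α i = 0 := le_antisymm ha (hα i)
          have hω0 : omg k N q lam α β i = 0 := by
            unfold omg; rw [if_neg hP, if_pos ha]
          rw [hΩ0, hω0, zero_mul, zero_mul, add_zero, if_neg (by push_neg; intro _; omega)]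
        · have hβ' : ((β - Pi.single i 1 : Fin N → ℤ)) i = 0 := by
            simp only [Pi.sub_apply, Pi.single_eq_same]; omega
          have hP' : (∏ s, q i s ^ (((α - Pi.single i 1 : Fin N → ℤ)) s - ((β - Pi.single i 1 : Fin N → ℤ)) s)) ≠ lam i := by
            rw [hPsub]; exact hP
          have hΩ' : Omega k N q lam (α - Pi.single i 1) (β - Pi.single i 1) i ≠ 0 :=
            Omega_ne k N q hq0 hq1 hqinv lam _ _ i hβ' hP'
          have hω : omg k N q lam α β i
              = (Omega k N q lam (α - Pi.single i 1) (β - Pi.single i 1) i)⁻¹ := by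
            unfold omg
            rw [if_neg hP, if_neg ha, if_neg (by omega)]
          rw [hΩ0, hω, zero_mul, zero_add, inv_mul_cancel₀ hΩ', if_pos ⟨hP, by omega⟩]
  rw [Finset.sum_congr rfl fun i _ => key i]
  rw [Finset.sum_boole]
  unfold normg
  norm_num [Pi.sub_apply]
end
end
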